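/- arXiv:1909.04816 — 2 statements merged into one kernel-verified Lean document; each statement's English description precedes it below -/
import Mathlib

section
/- Let α : ℤ² → {e₁, e₂} be an arrow field on the two-dimensional integer lattice such that every point lies on a bi-infinite trajectory and no two distinct bi-infinite trajectories coalesce. Let R₀ = {k(−e₁+e₂) : −L/2 ≤ k ≤ L/2} be a diagonal segment. Then fixing the value of α at a single point x ∈ R₀ determines α at every point of R₀; specifically, α is constant on R₀. -/
/-!
Every step of a walk raises the level `z.1 + z.2` by one, so a bi-infinite trajectory meets each
antidiagonal at most once. Let `w = z + (-1, 1)`, so that `z + e₂ = w + e₁ = z + (0, 1) =: u`.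
If `α z = e₂` and `α w = e₁`, the trajectories through `z` and `w` meet at `u`, hence coincide,
and contain two distinct points of one antidiagonal. If `α z = e₁` and `α w = e₂`, the point `u`,
which lies on a bi-infinite trajectory, has no predecessor. So `α z = α w`: the arrow field is
constant along antidiagonals, in particular on `R₀`.
-/

/-- The walk generated by the arrow field `α`. -/
def walk (α : ℤ × ℤ → ℤ × ℤ) (z : ℤ × ℤ) : ℕ → ℤ × ℤ
  | 0 => z
  | k + 1 => walk α z k + α (walk α z k)

/-- `S` is a bi-infinite trajectory of the arrow field `α`. -/
def IsBiTraj (α : ℤ × ℤ → ℤ × ℤ) (S : Set (ℤ × ℤ)) : Prop :=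
  ∃ f : ℤ → ℤ × ℤ, S = Set.range f ∧ ∀ n : ℤ, f (n + 1) = f n + α (f n)

section ArrowField

variable {α : ℤ × ℤ → ℤ × ℤ}

lemma level_add_arrow (hdir : ∀ z, α z = (1, 0) ∨ α z = (0, 1)) (z : ℤ × ℤ) :
    (z + α z).1 + (z + α z).2 = z.1 + z.2 + 1 := by
  rcases hdir z with h | h <;> simp only [h, Prod.fst_add, Prod.snd_add] <;> ring

lemma level_of_step_eq (hdir : ∀ z, α z = (1, 0) ∨ α z = (0, 1)) {f : ℤ → ℤ × ℤ}
    (hf : ∀ n, f (n + 1) = f n + α (f n)) (n : ℤ) :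
    (f n).1 + (f n).2 = (f 0).1 + (f 0).2 + n := by
  induction n using Int.induction_on with
  | zero => simp
  | succ k ih => rw [hf, level_add_arrow hdir, ih]; ring
  | pred k ih =>
    have h := level_add_arrow hdir (f (-k - 1))
    rw [← hf, sub_add_cancel, ih] at h
    linarith

namespace IsBiTraj

variable {S : Set (ℤ × ℤ)}

lemma add_arrow_mem (hS : IsBiTraj α S) {x : ℤ × ℤ} (hx : x ∈ S) : x + α x ∈ S := by
  obtain ⟨f, rfl, hf⟩ := hS
  obtain ⟨n, rfl⟩ := hx
  exact ⟨n + 1, hf n⟩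

lemma exists_add_arrow_eq (hS : IsBiTraj α S) {u : ℤ × ℤ} (hu : u ∈ S) :
    ∃ p, p + α p = u := by
  obtain ⟨f, rfl, hf⟩ := hS
  obtain ⟨n, rfl⟩ := hu
  exact ⟨f (n - 1), by rw [← hf, sub_add_cancel]⟩

lemma eq_of_level_eq (hdir : ∀ z, α z = (1, 0) ∨ α z = (0, 1)) (hS : IsBiTraj α S)
    {x y : ℤ × ℤ} (hx : x ∈ S) (hy : y ∈ S) (hxy : x.1 + x.2 = y.1 + y.2) : x = y := by
  obtain ⟨f, rfl, hf⟩ := hS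
  obtain ⟨a, rfl⟩ := hx
  obtain ⟨b, rfl⟩ := hy
  rw [level_of_step_eq hdir hf a, level_of_step_eq hdir hf b, add_right_inj] at hxy
  rw [hxy]

end IsBiTraj

lemma arrow_add_antidiag (hdir : ∀ z, α z = (1, 0) ∨ α z = (0, 1))
    (hbi : ∀ z : ℤ × ℤ, ∃ S : Set (ℤ × ℤ), IsBiTraj α S ∧ z ∈ S)
    (hnocoal : ∀ S T : Set (ℤ × ℤ), IsBiTraj α S → IsBiTraj α T →
      (S ∩ T).Nonempty → S = T)
    (z : ℤ × ℤ) : α (z + (-1, 1)) = α z := by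
  set w : ℤ × ℤ := z + (-1, 1) with hw
  rcases hdir z with hz | hz <;> rcases hdir w with hw' | hw' <;> rw [hz, hw']
  · obtain ⟨S, hS, hu⟩ := hbi (z + (0, 1))
    obtain ⟨p, hp⟩ := hS.exists_add_arrow_eq hu
    rcases hdir p with h | h <;> rw [h] at hp
    · have hpw : p = w := by
        rw [eq_sub_of_add_eq hp, hw]; ext <;> simp; ring
      rw [hpw, hw'] at h
      simp at h
    · have hpz : p = z := add_right_cancel hp
      rw [hpz, hz] at h
      simp at h
  · obtain ⟨S, hS, hzS⟩ := hbi z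
    obtain ⟨T, hT, hwT⟩ := hbi w
    have hmeet : z + α z = w + α w := by
      rw [hz, hw', hw]; ext <;> simp
    have hST : S = T := hnocoal S T hS hT
      ⟨z + α z, hS.add_arrow_mem hzS, hmeet ▸ hT.add_arrow_mem hwT⟩
    have hzw : z = w := hS.eq_of_level_eq hdir hzS (hST ▸ hwT) (by simp [hw]; ring)
    simpa [hw] using congrArg Prod.fst hzw

end ArrowField

/-- for a directed arrow field on ℤ² in which every point lies on a
bi-infinite trajectory and no two distinct bi-infinite trajectories share a
point, the arrow field is constant on any diagonal segment
`R₀ = {k(−e₁+e₂) : −L/2 ≤ k ≤ L/2}`. -/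
theorem stmt_1 (α : ℤ × ℤ → ℤ × ℤ)
    (hdir : ∀ z, α z = (1, 0) ∨ α z = (0, 1))
    (hbi : ∀ z : ℤ × ℤ, ∃ S : Set (ℤ × ℤ), IsBiTraj α S ∧ z ∈ S)
    (hnocoal : ∀ S T : Set (ℤ × ℤ), IsBiTraj α S → IsBiTraj α T →
      (S ∩ T).Nonempty → S = T)
    (L : ℕ) :
    ∀ k k' : ℤ, |k| ≤ (L : ℤ) / 2 → |k'| ≤ (L : ℤ) / 2 →
      α (k • ((-1, 1) : ℤ × ℤ)) = α (k' • ((-1, 1) : ℤ × ℤ)) := by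
  have hconst : ∀ k : ℤ, α (k • ((-1, 1) : ℤ × ℤ)) = α 0 := by
    intro k
    induction k using Int.induction_on with
    | zero => rw [zero_smul]
    | succ m ih => rw [add_smul, one_smul, arrow_add_antidiag hdir hbi hnocoal, ih]
    | pred m ih =>
      rw [← ih, ← arrow_add_antidiag hdir hbi hnocoal, sub_smul, one_smul, sub_add_cancel]
  intro k k' _ _
  rw [hconst k, hconst k']
end

section
/- For j ≤ √ε·B, k ≤ B (where B = |∂R'| is of order L^{d−1}), the quantity binom(B; j, k, B−j−k) · (e^{3εL})^k · (e^{3L log|A|})^j is bounded above by 2^B · exp(C₁√ε L^d) for a constant C₁ depending only on |A| and d (not on ε or L), provided L^{d-1} ≤ L^d and B ≤ c·L^{d−1}. -/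
/-! The trinomial coefficient is at most `B^j · 2^B`, and `B ≤ c L^{d-1}` gives `log B = O(L)`.
Since `j ≤ √ε B` and, using `ε ≤ 1`, also `ε k ≤ √ε B`, each of the three exponents
`j log B`, `3 ε L k` and `3 L log|A| j` is `O(√ε · B · L) = O(√ε L^d)`. -/

open Real

theorem choose_mul_choose_sub_le (n j k : ℕ) :
    (n.choose j : ℝ) * ((n - j).choose k : ℝ) ≤ exp (j * log n) * 2 ^ n := by
  have h_first : (n.choose j : ℝ) ≤ exp (j * log n) := by
    rw [exp_nat_mul]
    calc (n.choose j : ℝ) ≤ (n : ℝ) ^ j := by exact_mod_cast n.choose_le_pow j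
      _ ≤ exp (log n) ^ j := by gcongr; exact le_exp_log _
  have h_second : ((n - j).choose k : ℝ) ≤ 2 ^ n := by
    exact_mod_cast (Nat.choose_le_two_pow _ _).trans (Nat.pow_le_pow_right two_pos (n.sub_le j))
  exact mul_le_mul h_first h_second (by positivity) (by positivity)

theorem log_natCast_le_of_le_mul_pow {B m : ℕ} {c L : ℝ} (hL : 1 ≤ L)
    (hB : (B : ℝ) ≤ c * L ^ m) : log B ≤ (log⁺ c + m) * L := by
  calc log B = log⁺ B := log_of_nat_eq_posLog.symm
    _ ≤ log⁺ (c * L ^ m) := posLog_le_posLog (Nat.cast_nonneg B) hB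
    _ ≤ log⁺ c + m * log L := by
        rw [← posLog_eq_log (by rwa [abs_of_nonneg (by linarith)]), ← posLog_pow]
        exact posLog_mul
    _ ≤ log⁺ c * L + m * L := by
        gcongr
        · exact le_mul_of_one_le_right posLog_nonneg hL
        · exact log_le_self (by linarith)
    _ = (log⁺ c + m) * L := by ring

/-- the trinomial configuration-counting estimate.  For
`j ≤ √ε·B`, `k ≤ B` and `B ≤ c·L^{d−1}`, the quantity
`binom(B; j, k, B−j−k)·(e^{3εL})^k·(e^{3L log|A|})^j` is at most
`2^B·exp(C₁ √ε L^d)` for a constant `C₁` depending only on `|A|`, `d` (and the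
boundary constant `c`), not on `ε` or `L`. -/
theorem stmt_6 (Acard d : ℕ) (hd : 1 ≤ d) (c : ℝ) (hc : 0 < c) :
    ∃ C₁ : ℝ, 0 < C₁ ∧
      ∀ (ε : ℝ), 0 < ε → ε ≤ 1 → ∀ (L B j k : ℕ), 1 ≤ L →
        (B : ℝ) ≤ c * (L : ℝ) ^ (d - 1) →
        (j : ℝ) ≤ Real.sqrt ε * B → k ≤ B → j + k ≤ B →
        (L : ℝ) ^ (d - 1) ≤ (L : ℝ) ^ d →
        ((B.choose j : ℝ) * ((B - j).choose k : ℝ)) *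
            Real.exp (3 * ε * L) ^ k * Real.exp (3 * L * Real.log Acard) ^ j
          ≤ 2 ^ B * Real.exp (C₁ * Real.sqrt ε * (L : ℝ) ^ d) := by
  have hA : 0 ≤ log Acard := log_natCast_nonneg Acard
  refine ⟨c * (log⁺ c + d + 3 + 3 * log Acard),
    mul_pos hc (by linarith [posLog_nonneg (x := c)]), ?_⟩
  intro ε hε0 hε1 L B j k hL hB hj hk _ _
  have hL1 : (1 : ℝ) ≤ L := by exact_mod_cast hL
  have hLd : (L : ℝ) ^ (d - 1) * L = L ^ d := by rw [← pow_succ, Nat.sub_add_cancel hd]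
  have hj' : (j : ℝ) ≤ √ε * (c * L ^ (d - 1)) := hj.trans (by gcongr)
  have hk' : ε * k ≤ √ε * (c * L ^ (d - 1)) :=
    mul_le_mul (le_sqrt_self_iff.2 hε1) ((Nat.cast_le.2 hk).trans hB) (by positivity)
      (by positivity)
  have hlogB : log B ≤ (log⁺ c + d) * L :=
    (log_natCast_le_of_le_mul_pow hL1 hB).trans (by gcongr; exact_mod_cast d.sub_le 1)
  have hexp : j * log B + (3 * ε * L * k + 3 * L * log Acard * j)
      ≤ c * (log⁺ c + d + 3 + 3 * log Acard) * √ε * L ^ d := by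
    rw [← hLd]
    linarith [mul_le_mul hj' hlogB (log_natCast_nonneg B) (by positivity),
      mul_le_mul_of_nonneg_left hk' (by positivity : (0 : ℝ) ≤ 3 * L),
      mul_le_mul_of_nonneg_left hj' (by positivity : (0 : ℝ) ≤ 3 * L * log Acard)]
  calc ((B.choose j : ℝ) * ((B - j).choose k : ℝ)) *
          exp (3 * ε * L) ^ k * exp (3 * L * log Acard) ^ j
      = ((B.choose j : ℝ) * ((B - j).choose k : ℝ)) *
          exp (3 * ε * L * k + 3 * L * log Acard * j) := by
        rw [exp_add, mul_comm _ (k : ℝ), mul_comm _ (j : ℝ), exp_nat_mul, exp_nat_mul,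
          mul_assoc]
    _ ≤ exp (j * log B) * 2 ^ B * exp (3 * ε * L * k + 3 * L * log Acard * j) :=
        mul_le_mul_of_nonneg_right (choose_mul_choose_sub_le B j k) (exp_pos _).le
    _ = 2 ^ B * exp (j * log B + (3 * ε * L * k + 3 * L * log Acard * j)) := by
        simp only [exp_add]; ring
    _ ≤ 2 ^ B * exp (c * (log⁺ c + d + 3 + 3 * log Acard) * √ε * L ^ d) := by gcongr
end
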